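/- arXiv:2307.09453 — 2 statements merged into one kernel-verified Lean document; each statement's English description precedes it below -/
import Mathlib

section
/- Let N ≥ 3 be odd, (S,E) the cycle of length N, and fix an edge ee in E. For every B in phi with supp(B) ∩ ee ≠ ∅ there is a unique I in B with |I ∩ ee| = 1 (call it I_B); defining B^! = B∖{I_B} if n_B is odd and B^! = B if n_B is even, the map B ↦ B^! is injective on phi; hence it is a bijection from phi onto omega := {B^! : B in phi}. -/
/-- The induced subgraph of `adj` on `I` is a path (type `A_m`, `m ≥ 1`):
there is an injective enumeration `f : Fin (m+1) → S` of `I` such that two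
elements of `I` are adjacent iff they are consecutive in the enumeration. -/
def IsPathOn {S : Type} [DecidableEq S] (adj : S → S → Prop) (I : Finset S) : Prop :=
  ∃ (m : ℕ) (f : Fin (m + 1) → S), Function.Injective f ∧
    I = Finset.image f Finset.univ ∧
    ∀ i j : Fin (m + 1), adj (f i) (f j) ↔ ((i : ℕ) + 1 = (j : ℕ) ∨ (j : ℕ) + 1 = (i : ℕ))

/-- The induced subgraph of `adj` on `I` is connected. -/
def ConnOn {S : Type} (adj : S → S → Prop) (I : Finset S) : Prop :=
  ∀ s ∈ I, ∀ t ∈ I, Relation.ReflTransGen (fun a b => a ∈ I ∧ b ∈ I ∧ adj a b) s t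

/-- `I ∈ Cal_I^1`: the induced subgraph on `I` is a path and `|I|` is odd. -/
def CalI1 {S : Type} [DecidableEq S] (adj : S → S → Prop) (I : Finset S) : Prop :=
  IsPathOn adj I ∧ Odd I.card

/-- `I ≺ I'`. -/
def Prec {S : Type} [DecidableEq S] (adj : S → S → Prop) (I I' : Finset S) : Prop :=
  I ⊂ I' ∧ ¬ ConnOn adj (I' \ I)

/-- `I ♠ I'`. -/
def Spade {S : Type} [DecidableEq S] (adj : S → S → Prop) (I I' : Finset S) : Prop :=
  I ∩ I' = ∅ ∧ ¬ ConnOn adj (I ∪ I')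

/-- `I^{ev}`: the set of `s ∈ I` such that `I ∖ {s}` is the disjoint union of
`I', I'' ∈ Cal_I^1` with `I' ♠ I''`. -/
def Iev {S : Type} [DecidableEq S] (adj : S → S → Prop) (I : Finset S) : Set S :=
  {s | s ∈ I ∧ ∃ I' I'' : Finset S, CalI1 adj I' ∧ CalI1 adj I'' ∧
    Spade adj I' I'' ∧ I.erase s = I' ∪ I''}

/-- Property (P0). -/
def P0 {S : Type} [DecidableEq S] (adj : S → S → Prop) (B : Finset (Finset S)) : Prop :=
  ∀ I ∈ B, ∀ I' ∈ B, I = I' ∨ Spade adj I I' ∨ Prec adj I I' ∨ Prec adj I' I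

/-- Property (P1). -/
def P1 {S : Type} [DecidableEq S] (adj : S → S → Prop) (B : Finset (Finset S)) : Prop :=
  ∀ I ∈ B, ∃ (k : ℕ) (f : Fin k → Finset S),
    (∀ j, f j ∈ B ∧ Prec adj (f j) I) ∧
    (∀ j j', j ≠ j' → Disjoint (f j) (f j')) ∧
    Iev adj I ⊆ ⋃ j, ((f j : Finset S) : Set S)

/-- `phi`: finite sets `B` of elements of `Cal_I^1` satisfying (P0) and (P1). -/
def phiSet {S : Type} [DecidableEq S] (adj : S → S → Prop) : Set (Finset (Finset S)) :=
  {B | (∀ I ∈ B, CalI1 adj I) ∧ P0 adj B ∧ P1 adj B}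

/-- `supp(B)`. -/
def suppB {S : Type} [DecidableEq S] (B : Finset (Finset S)) : Finset S := B.biUnion id

/-- `g_s(B)`. -/
def gs {S : Type} [DecidableEq S] (B : Finset (Finset S)) (s : S) : ℕ :=
  (B.filter (fun I => s ∈ I)).card

/-- `e_I = ∑_{s ∈ I} e_s`. -/
def eSum {S : Type} {V : Type} [AddCommGroup V] [Module (ZMod 2) V]
    (e : S → V) (I : Finset S) : V := ∑ s ∈ I, e s

/-- `L_B`: the `F`-span of `{e_I : I ∈ B}`. -/
def LB {S : Type} {V : Type} [AddCommGroup V] [Module (ZMod 2) V]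
    (e : S → V) (B : Finset (Finset S)) : Submodule (ZMod 2) V :=
  Submodule.span (ZMod 2) ((fun I => eSum e I) '' (B : Set (Finset S)))

/-- `eps(B) = ∑_{s ∈ S} ((g_s(B)(g_s(B)+1)/2) mod 2) e_s`. -/
def epsB {S : Type} [DecidableEq S] [Fintype S] {V : Type} [AddCommGroup V]
    [Module (ZMod 2) V] (e : S → V) (B : Finset (Finset S)) : V :=
  ∑ s : S, ((gs B s * (gs B s + 1) / 2 : ℕ) : ZMod 2) • e s

/-- The triple `(V, <,>, e)` (with graph `adj`) is perfect. -/
def IsPerfect {S : Type} [DecidableEq S] [Fintype S] {V : Type} [AddCommGroup V]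
    [Module (ZMod 2) V] (adj : S → S → Prop) (e : S → V) : Prop :=
  (∀ B ∈ phiSet adj,
      (LinearIndependent (ZMod 2) (fun I : {I : Finset S // I ∈ B} => eSum e I.1)) ∧
      (∀ I : Finset S, CalI1 adj I → (eSum e I ∈ LB e B ↔ I ∈ B))) ∧
  (∀ B ∈ phiSet adj, epsB e B ∈ LB e B) ∧
  Set.BijOn (epsB e) (phiSet adj) (⋃ B ∈ phiSet adj, ((LB e B : Submodule (ZMod 2) V) : Set V)) ∧
  (∀ B ∈ phiSet adj, ∀ B' ∈ phiSet adj, epsB e B' ∈ LB e B → ∀ s : S, gs B' s ≤ gs B s)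
/-- Adjacency of the cycle of length `N` on `S = ZMod N`. -/
def cadj (N : ℕ) (i j : ZMod N) : Prop := j = i + 1 ∨ i = j + 1

/-- `V = F^S` for `S = ZMod N`. -/
abbrev Vc (N : ℕ) := ZMod N → ZMod 2

/-- The standard basis vector `e_s`. -/
def eVec (N : ℕ) (s : ZMod N) : Vc N := Pi.single s 1

/-- The line `F·e_S`, where `e_S = ∑_{s ∈ S} e_s`. -/
def radN (N : ℕ) [NeZero N] : Submodule (ZMod 2) (Vc N) :=
  Submodule.span (ZMod 2) {eSum (eVec N) Finset.univ}

/-- `Vbar = V / (F·e_S)`. -/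
abbrev VbarN (N : ℕ) [NeZero N] := Vc N ⧸ radN N

/-- The quotient map `pi : V → Vbar`. -/
def piQ (N : ℕ) [NeZero N] : Vc N →ₗ[ZMod 2] VbarN N := (radN N).mkQ

/-- `ebar_s = pi(e_s)`. -/
def ebar (N : ℕ) [NeZero N] (s : ZMod N) : VbarN N := piQ N (eVec N s)
open scoped Classical in
/-- The connected component of `s` in the induced subgraph of `adj` on `I`. -/
noncomputable def compOf {S : Type} [DecidableEq S] (adj : S → S → Prop)
    (I : Finset S) (s : S) : Finset S :=
  I.filter (fun t => Relation.ReflTransGen (fun a b => a ∈ I ∧ b ∈ I ∧ adj a b) s t)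

/-- `c(I)`: the set of vertex sets of connected components of the induced subgraph on `I`. -/
noncomputable def comps {S : Type} [DecidableEq S] (adj : S → S → Prop)
    (I : Finset S) : Finset (Finset S) :=
  I.image (compOf adj I)

/-- `|c^0(I)|`: the number of connected components of even cardinality. -/
noncomputable def c0card {S : Type} [DecidableEq S] (adj : S → S → Prop)
    (I : Finset S) : ℕ :=
  ((comps adj I).filter (fun C => Even C.card)).card

/-- `V_0 = {e_I : I ⊊ S with |c^0(I)| even}`. -/
def V0set (N : ℕ) [NeZero N] : Set (Vc N) :=
  {v | ∃ I : Finset (ZMod N), I ≠ Finset.univ ∧ Even (c0card (cadj N) I) ∧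
    v = eSum (eVec N) I}

/-- `V_1 = {e_S} ∪ {e_I : ∅ ≠ I ⊊ S with |c^0(I)| odd}`. -/
def V1set (N : ℕ) [NeZero N] : Set (Vc N) :=
  {v | v = eSum (eVec N) Finset.univ ∨ ∃ I : Finset (ZMod N), I ≠ ∅ ∧ I ≠ Finset.univ ∧
    Odd (c0card (cadj N) I) ∧ v = eSum (eVec N) I}
open scoped Classical in
/-- `I^{odd} = I ∖ I^{ev}` (as a `Finset`). -/
noncomputable def IoddF {S : Type} [DecidableEq S] (adj : S → S → Prop)
    (I : Finset S) : Finset S :=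
  I.filter (fun s => s ∉ Iev adj I)

/-- `n_B = |{I ∈ B : ee ⊆ I}|`. -/
def nB {S : Type} [DecidableEq S] (ee : Finset S) (B : Finset (Finset S)) : ℕ :=
  (B.filter (fun I => ee ⊆ I)).card

open scoped Classical in
/-- `B ↦ B^!`: remove the unique `I_B ∈ B` with `|I_B ∩ ee| = 1` when `n_B` is odd;
leave `B` unchanged when `n_B` is even. -/
noncomputable def bangF {S : Type} [DecidableEq S] (ee : Finset S)
    (B : Finset (Finset S)) : Finset (Finset S) :=
  if h : Odd (nB ee B) ∧ ∃ I ∈ B, (I ∩ ee).card = 1 then B.erase h.2.choose else B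

/-- `omega = {B^! : B ∈ phi}`. -/
def omegaSet {S : Type} [DecidableEq S] (adj : S → S → Prop) (ee : Finset S) :
    Set (Finset (Finset S)) :=
  (bangF ee) '' (phiSet adj)

open scoped Classical in
/-- `Btilde`: the unique element of `phi` with `Btilde^! = B`. -/
noncomputable def tildeF {S : Type} [DecidableEq S] (adj : S → S → Prop) (ee : Finset S)
    (C : Finset (Finset S)) : Finset (Finset S) :=
  if h : ∃ B ∈ phiSet adj, bangF ee B = C then h.choose else ∅

/-- `'eps(B) = eps(Btilde)`. -/
noncomputable def epsO {S : Type} [DecidableEq S] [Fintype S] {V : Type} [AddCommGroup V]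
    [Module (ZMod 2) V] (adj : S → S → Prop) (ee : Finset S) (e : S → V)
    (C : Finset (Finset S)) : V :=
  epsB e (tildeF adj ee C)

/-- `B' ⪯ B` on `omega`. -/
def preceqO {S : Type} [DecidableEq S] [Fintype S] {V : Type} [AddCommGroup V]
    [Module (ZMod 2) V] (adj : S → S → Prop) (ee : Finset S) (e : S → V)
    (B' B : Finset (Finset S)) : Prop :=
  ∃ (k : ℕ) (c : ℕ → Finset (Finset S)), c 0 = B' ∧ c k = B ∧
    (∀ i ≤ k, c i ∈ omegaSet adj ee) ∧
    (∀ i < k, epsO adj ee e (c i) ∈ LB e (c (i + 1)))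

/-- The linear form `v ↦ v t + v t'` on `V`. -/
def zeeV (N : ℕ) (t t' : ZMod N) : Vc N →ₗ[ZMod 2] ZMod 2 :=
  (LinearMap.proj t : Vc N →ₗ[ZMod 2] ZMod 2) + (LinearMap.proj t' : Vc N →ₗ[ZMod 2] ZMod 2)

/-- `z_ee : Vbar → F`, the linear map with `z_ee(ebar_s) = 1` iff `s ∈ ee = {t,t'}`. -/
noncomputable def zee (N : ℕ) [NeZero N] (t t' : ZMod N) : VbarN N →ₗ[ZMod 2] ZMod 2 :=
  Submodule.liftQ (radN N) (zeeV N t t') (by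
    rw [radN, Submodule.span_le, Set.singleton_subset_iff]
    have h1 : ∀ u : ZMod N, (eSum (eVec N) Finset.univ) u = 1 := by
      intro u
      simp [eSum, eVec, Finset.sum_apply, Finset.sum_pi_single]
    simp only [SetLike.mem_coe, LinearMap.mem_ker, zeeV, LinearMap.add_apply,
      LinearMap.proj_apply, h1]
    decide)
/-- The maximal elements of a finite family of finsets, under inclusion. -/
def maxElts {S : Type} [DecidableEq S] (C : Finset (Finset S)) : Finset (Finset S) :=
  C.filter (fun I => ∀ I' ∈ C, ¬ I ⊂ I')

/-- `restB B k = B ∖ (B_1 ∪ … ∪ B_k)`: what remains of `B` after removing the first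
`k` layers; the `k`-th layer (`k ≥ 1`) is `B_k = maxElts (restB B (k-1))`. -/
def restB {S : Type} [DecidableEq S] (B : Finset (Finset S)) : ℕ → Finset (Finset S)
  | 0 => B
  | k + 1 => restB B k \ maxElts (restB B k)

/-- The relation `B' ≤ B` on `phi(V)`. -/
def lePhi {S : Type} [DecidableEq S] [Fintype S] {V : Type} [AddCommGroup V]
    [Module (ZMod 2) V] (adj : S → S → Prop) (e : S → V)
    (B' B : Finset (Finset S)) : Prop :=
  ∃ (k : ℕ) (c : ℕ → Finset (Finset S)), c 0 = B' ∧ c k = B ∧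
    (∀ i ≤ k, c i ∈ phiSet adj) ∧
    (∀ i < k, epsB e (c i) ∈ LB e (c (i + 1)))

/-!
In the odd cycle the elements of `Cal_I^1` are exactly the arcs of odd length `l ≤ N - 2`, and
`I^{ev}` of an arc contains its interior vertices at odd positions. Two arcs of `B` meeting
`ee = {t, t'}` in one point are equal: if they share that point, `≺` would put the smaller one
strictly inside the larger one, which then contains the other point too; otherwise they are
adjacent, which rules out both `♠` and `≺`. Such an arc exists: a minimal `K ∈ B` containing
`ee` has a vertex of `ee` at an odd position, and the element of `B` covering it by (P1) lies
below `K`, so it cannot contain all of `ee`.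

For injectivity, `n_{B^!} = n_B`, so the only case to exclude is `B ∖ {J} = B' ∖ {J'}` with
`J ≠ J'` and `n_B` odd. Then `B` and `B'` share a minimal `K₀ ⊇ ee`, and `J`, `J'` are the
arcs covering the same vertex `v ∈ ee ∩ K₀^{ev}`, so they end at `v` on the same side. The
vertex just past the shorter one sits at an odd position of the longer one; the element covering
it belongs to both families, so it contains the shorter arc, hence `ee`, and lies strictly below
`K₀`, contradicting minimality.
-/

lemma eq_of_eq_one_or_eq_neg_one {R : Type*} [Ring R] {e d : R} (he : e = 1 ∨ e = -1)
    (hd : d = 1 ∨ d = -1) (hne : e ≠ -d) : e = d := by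
  rcases he with rfl | rfl <;> rcases hd with rfl | rfl <;> simp_all

section

open Finset

variable {S : Type} [DecidableEq S] {adj : S → S → Prop}

lemma IsPathOn.connOn {I : Finset S} (h : IsPathOn adj I) : ConnOn adj I := by
  obtain ⟨m, f, -, rfl, hadj⟩ := h
  intro x hx y hy
  set R := fun a b => a ∈ image f univ ∧ b ∈ image f univ ∧ adj a b
  have hmem : ∀ i, f i ∈ image f univ := fun i => mem_image_of_mem f (mem_univ i)
  have hreach : ∀ k (hk : k ≤ m), Relation.ReflTransGen R (f 0) (f ⟨k, by omega⟩) ∧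
      Relation.ReflTransGen R (f ⟨k, by omega⟩) (f 0) := by
    intro k hk
    induction k with
    | zero => exact ⟨.refl, .refl⟩
    | succ k ih =>
      obtain ⟨h₁, h₂⟩ := ih (by omega)
      exact ⟨h₁.tail ⟨hmem _, hmem _, (hadj _ _).2 (Or.inl rfl)⟩,
        h₂.head ⟨hmem _, hmem _, (hadj _ _).2 (Or.inr rfl)⟩⟩
  obtain ⟨i, -, rfl⟩ := mem_image.1 hx
  obtain ⟨j, -, rfl⟩ := mem_image.1 hy
  exact (hreach i (by omega)).2.trans (hreach j (by omega)).1

lemma ConnOn.union {A B : Finset S} (hsymm : ∀ x y, adj x y → adj y x) (hA : ConnOn adj A)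
    (hB : ConnOn adj B) {a b : S} (ha : a ∈ A) (hb : b ∈ B) (hab : adj a b) :
    ConnOn adj (A ∪ B) := by
  have mono : ∀ {C : Finset S}, C ⊆ A ∪ B → ∀ {x y : S},
      Relation.ReflTransGen (fun u v => u ∈ C ∧ v ∈ C ∧ adj u v) x y →
      Relation.ReflTransGen (fun u v => u ∈ A ∪ B ∧ v ∈ A ∪ B ∧ adj u v) x y :=
    fun hC x y h =>
      Relation.ReflTransGen.mono (fun u v ⟨hu, hv, huv⟩ => ⟨hC hu, hC hv, huv⟩) x y h
  have hA' := fun x hx y hy => mono subset_union_left (hA x hx y hy)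
  have hB' := fun x hx y hy => mono subset_union_right (hB x hx y hy)
  have hab' := mem_union_left B ha
  have hba' := mem_union_right A hb
  intro x hx y hy
  rcases mem_union.1 hx with hx | hx <;> rcases mem_union.1 hy with hy | hy
  · exact hA' x hx y hy
  · exact ((hA' x hx a ha).tail ⟨hab', hba', hab⟩).trans (hB' b hb y hy)
  · exact ((hB' x hx b hb).tail ⟨hba', hab', hsymm a b hab⟩).trans (hA' a ha y hy)
  · exact hB' x hx y hy

lemma not_connOn_union {A B : Finset S} (hAB : Disjoint A B)
    (hnadj : ∀ x ∈ A, ∀ y ∈ B, ¬ adj x y) {a b : S} (ha : a ∈ A) (hb : b ∈ B) :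
    ¬ ConnOn adj (A ∪ B) := by
  intro h
  have hA : ∀ {y}, Relation.ReflTransGen (fun u v => u ∈ A ∪ B ∧ v ∈ A ∪ B ∧ adj u v) a y
      → y ∈ A := by
    intro y hy
    induction hy with
    | refl => exact ha
    | tail _ step ih =>
      rcases mem_union.1 step.2.1 with h | h
      · exact h
      · exact absurd step.2.2 (hnadj _ ih _ h)
  exact disjoint_left.1 hAB (hA (h a (mem_union_left B ha) b (mem_union_right A hb))) hb

lemma card_inter_pair_eq_one_iff {I : Finset S} {t t' : S} (hne : t ≠ t') :
    (I ∩ {t, t'}).card = 1 ↔ (t ∈ I ∧ t' ∉ I) ∨ (t' ∈ I ∧ t ∉ I) := by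
  by_cases ht : t ∈ I <;> by_cases ht' : t' ∈ I <;>
    simp [inter_insert_of_mem, inter_insert_of_notMem, ht, ht', hne]

lemma not_subset_of_card_inter_eq_one {I ee : Finset S} (hee : ee.card = 2)
    (h : (I ∩ ee).card = 1) : ¬ ee ⊆ I := by
  intro hs
  rw [inter_eq_right.2 hs] at h
  omega

lemma subset_of_card_inter_ne_one {I ee : Finset S} (hee : ee.card = 2) {v : S} (hv : v ∈ I)
    (hvee : v ∈ ee) (h : (I ∩ ee).card ≠ 1) : ee ⊆ I := by
  have hpos : 0 < (I ∩ ee).card := card_pos.2 ⟨v, mem_inter.2 ⟨hv, hvee⟩⟩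
  have hle : (I ∩ ee).card ≤ ee.card := card_le_card inter_subset_right
  rw [← inter_eq_right, eq_of_subset_of_card_le inter_subset_right (by omega)]

lemma nB_erase {B : Finset (Finset S)} {J ee : Finset S} (h : ¬ ee ⊆ J) :
    nB ee (B.erase J) = nB ee B := by
  rw [nB, nB, filter_erase, erase_eq_of_notMem fun hJ => h (mem_filter.1 hJ).2]

lemma exists_subset_of_odd_nB {B : Finset (Finset S)} {ee : Finset S} (h : Odd (nB ee B)) :
    ∃ K ∈ B, ee ⊆ K := by
  obtain ⟨K, hK⟩ := card_pos.1 (show 0 < nB ee B from h.pos)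
  exact ⟨K, (mem_filter.1 hK).1, (mem_filter.1 hK).2⟩

lemma minimal_of_minimal_erase {B : Finset (Finset S)} {J ee K₀ : Finset S} (hJ : ¬ ee ⊆ J)
    (h : Minimal (fun K => K ∈ B.erase J ∧ ee ⊆ K) K₀) :
    Minimal (fun K => K ∈ B ∧ ee ⊆ K) K₀ :=
  h.mono (fun _ hK => ⟨mem_erase.2 ⟨fun hKJ => hJ (hKJ ▸ hK.2), hK.1⟩, hK.2⟩)
    ⟨mem_of_mem_erase h.1.1, h.1.2⟩

lemma nB_bangF {B : Finset (Finset S)} {ee : Finset S} (hee : ee.card = 2) :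
    nB ee (bangF ee B) = nB ee B := by
  rw [bangF]
  split_ifs with h
  · exact nB_erase (not_subset_of_card_inter_eq_one hee h.2.choose_spec.2)
  · rfl

lemma bangF_of_not_odd {B : Finset (Finset S)} {ee : Finset S} (h : ¬ Odd (nB ee B)) :
    bangF ee B = B := by
  rw [bangF, dif_neg fun h' => h h'.1]

lemma bangF_of_odd {B : Finset (Finset S)} {ee : Finset S} (h : Odd (nB ee B))
    (hex : ∃ I ∈ B, (I ∩ ee).card = 1) :
    ∃ J ∈ B, (J ∩ ee).card = 1 ∧ bangF ee B = B.erase J :=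
  ⟨hex.choose, hex.choose_spec.1, hex.choose_spec.2, by rw [bangF, dif_pos ⟨h, hex⟩]⟩

lemma exists_mem_prec_of_mem_Iev {B : Finset (Finset S)} (hB : P1 adj B) {I : Finset S}
    (hI : I ∈ B) {v : S} (hv : v ∈ Iev adj I) : ∃ X ∈ B, Prec adj X I ∧ v ∈ X := by
  obtain ⟨k, f, hf, -, hcover⟩ := hB I hI
  obtain ⟨j, hj⟩ := Set.mem_iUnion.1 (hcover hv)
  exact ⟨f j, (hf j).1, (hf j).2, hj⟩

lemma exists_card_inter_eq_one_of_minimal {B : Finset (Finset S)} (hB : P1 adj B)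
    {ee K₀ : Finset S} (hee : ee.card = 2)
    (hK₀ : Minimal (fun K => K ∈ B ∧ ee ⊆ K) K₀) {v : S} (hv : v ∈ Iev adj K₀)
    (hvee : v ∈ ee) : ∃ I ∈ B, v ∈ I ∧ (I ∩ ee).card = 1 ∧ Prec adj I K₀ := by
  obtain ⟨X, hXB, hXK₀, hvX⟩ := exists_mem_prec_of_mem_Iev hB hK₀.1.1 hv
  refine ⟨X, hXB, hvX, ?_, hXK₀⟩
  by_contra h
  exact hK₀.not_lt ⟨hXB, subset_of_card_inter_ne_one hee hvX hvee h⟩ hXK₀.1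

lemma ssubset_of_adj (hsymm : ∀ x y, adj x y → adj y x) {B : Finset (Finset S)}
    (hB : B ∈ phiSet adj) {J X : Finset S} (hJ : J ∈ B) (hX : X ∈ B)
    {x y : S} (hy : y ∈ J) (hxX : x ∈ X) (hxJ : x ∉ J) (hxy : adj x y) : J ⊂ X := by
  rcases hB.2.1 J hJ X hX with rfl | hsp | hpr | hpr
  · exact absurd hxX hxJ
  · exact absurd ((hB.1 J hJ).1.connOn.union hsymm (hB.1 X hX).1.connOn hy hxX
      (hsymm x y hxy)) hsp.2
  · exact hpr.1
  · exact absurd (hpr.1.subset hxX) hxJ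

end

namespace OddCycle

open Finset

variable {N : ℕ}

lemma cadj_symm {x y : ZMod N} (h : cadj N x y) : cadj N y x := h.symm

lemma val_natCast_sub (s : ZMod N) {k : ℕ} (hk : k < N) : (s + k - s).val = k := by
  rw [add_sub_cancel_left, ZMod.val_cast_of_lt hk]

lemma exists_step_of_isPathOn {m : ℕ} {f : Fin (m + 1) → ZMod N} (hinj : Function.Injective f)
    (hadj : ∀ i j : Fin (m + 1),
      cadj N (f i) (f j) ↔ ((i : ℕ) + 1 = j ∨ (j : ℕ) + 1 = i)) :
    ∃ δ : ZMod N, (δ = 1 ∨ δ = -1) ∧ ∀ i : Fin (m + 1), f i = f 0 + (i : ℕ) * δ := by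
  have hpm : ∀ k (hk : k + 1 ≤ m), f ⟨k + 1, by omega⟩ - f ⟨k, by omega⟩ = 1 ∨
      f ⟨k + 1, by omega⟩ - f ⟨k, by omega⟩ = -1 := by
    intro k hk
    rcases (hadj ⟨k, by omega⟩ ⟨k + 1, by omega⟩).2 (Or.inl rfl) with h | h
    · exact Or.inl (by rw [h]; ring)
    · exact Or.inr (by rw [h]; ring)
  rcases Nat.eq_zero_or_pos m with rfl | hm
  · refine ⟨1, Or.inl rfl, fun ⟨k, hk⟩ => ?_⟩
    obtain rfl : k = 0 := by omega
    simp
  set δ := f ⟨1, by omega⟩ - f 0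
  have hδ : δ = 1 ∨ δ = -1 := hpm 0 hm
  have hstep : ∀ k (hk : k + 1 ≤ m), f ⟨k + 1, by omega⟩ - f ⟨k, by omega⟩ = δ := by
    intro k hk
    induction k with
    | zero => rfl
    | succ k ih =>
      refine eq_of_eq_one_or_eq_neg_one (hpm _ hk) hδ fun h => ?_
      have := @hinj ⟨k + 2, by omega⟩ ⟨k, by omega⟩ (by
        rw [← ih (by omega)] at h
        linear_combination h)
      simp at this
  refine ⟨δ, hδ, fun ⟨k, hk⟩ => ?_⟩
  induction k with
  | zero => simp
  | succ k ih =>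
    rw [← sub_add_cancel (f ⟨k + 1, hk⟩) (f ⟨k, by omega⟩), hstep k (by omega),
      ih (by omega)]
    push_cast
    ring

variable [NeZero N]

lemma val_sub_add_val_sub (x y s : ZMod N) :
    (x - s).val = (x - y).val + (y - s).val ∨ (x - s).val + N = (x - y).val + (y - s).val := by
  have h := ZMod.val_add (x - y) (y - s)
  rw [sub_add_sub_cancel] at h
  have := ZMod.val_lt (x - y)
  have := ZMod.val_lt (y - s)
  rcases lt_or_ge ((x - y).val + (y - s).val) N with hlt | hge
  · exact Or.inl (h.trans (Nat.mod_eq_of_lt hlt))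
  · right
    rw [h, Nat.mod_eq_sub_mod hge, Nat.mod_eq_of_lt (by omega)]
    omega

lemma val_add_one_sub (hN : 2 ≤ N) (x s : ZMod N) :
    (x + 1 - s).val = (x - s).val + 1 ∨ ((x + 1 - s).val = 0 ∧ (x - s).val + 1 = N) := by
  have h1 : (1 : ZMod N).val = 1 := by rw [ZMod.val_one_eq_one_mod, Nat.mod_eq_of_lt hN]
  have := ZMod.val_lt (x - s)
  rcases val_sub_add_val_sub (x + 1) x s with h | h <;>
    simp only [add_sub_cancel_left, h1] at h <;> omega

lemma val_sub_of_cadj (hN : 2 ≤ N) {x y : ZMod N} (h : cadj N x y) (s : ZMod N) :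
    (y - s).val = (x - s).val + 1 ∨ (x - s).val = (y - s).val + 1 ∨
      ((y - s).val = 0 ∧ (x - s).val + 1 = N) ∨ ((x - s).val = 0 ∧ (y - s).val + 1 = N) := by
  rcases h with rfl | rfl
  · rcases val_add_one_sub hN x s with h | h <;> omega
  · rcases val_add_one_sub hN y s with h | h <;> omega

lemma ne_of_cadj (hN : 2 ≤ N) {x y : ZMod N} (h : cadj N x y) : x ≠ y := by
  rintro rfl
  have := ZMod.val_lt (x - x)
  rcases val_sub_of_cadj hN h x with h | h | h | h <;> omega

/-- The arc `s, s + 1, …, s + (l - 1)`, described by the position `(x - s).val` of its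
vertices; reasoning about arcs then becomes `omega` on positions, via `val_sub_add_val_sub`. -/
def arc (s : ZMod N) (l : ℕ) : Finset (ZMod N) :=
  univ.filter fun x => (x - s).val < l

@[simp]
lemma mem_arc {s x : ZMod N} {l : ℕ} : x ∈ arc s l ↔ (x - s).val < l := by
  simp [arc]

lemma card_arc (s : ZMod N) {l : ℕ} (hl : l ≤ N) : (arc s l).card = l := by
  rw [← card_range l]
  refine card_nbij' (fun x => (x - s).val) (fun k => s + k) ?_ ?_ ?_ ?_
  · intro x hx
    simpa using hx
  · intro k hk
    simp only [coe_range, Set.mem_Iio] at hk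
    simpa [Nat.mod_eq_of_lt (hk.trans_le hl)] using hk
  · intro x _
    simp
  · intro k hk
    simp only [coe_range, Set.mem_Iio] at hk
    exact val_natCast_sub s (hk.trans_le hl)

lemma image_add_natCast_eq_arc (s : ZMod N) {m : ℕ} (hm : m < N) :
    univ.image (fun i : Fin (m + 1) => s + (i : ℕ)) = arc s (m + 1) := by
  ext x
  simp only [mem_arc, mem_image, mem_univ, true_and]
  constructor
  · rintro ⟨i, rfl⟩
    rw [val_natCast_sub s (by omega)]
    exact i.isLt
  · intro hx
    exact ⟨⟨(x - s).val, hx⟩, by simp⟩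

lemma isPathOn_arc (s : ZMod N) {m : ℕ} (hm : m + 2 ≤ N) :
    IsPathOn (cadj N) (arc s (m + 1)) := by
  have hval : ∀ i : Fin (m + 1), (s + (i : ℕ) - s).val = i :=
    fun i => val_natCast_sub s (by omega)
  refine ⟨m, fun i => s + (i : ℕ), fun i j hij => Fin.ext ?_,
    (image_add_natCast_eq_arc s (by omega)).symm, fun i j => ⟨fun h => ?_, ?_⟩⟩
  · have := congrArg (fun x => (x - s).val) hij
    simpa only [hval] using this
  · have := val_sub_of_cadj (by omega) h s
    simp only [hval] at this
    omega
  · rintro (h | h)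
    · exact Or.inl (by simp only [← h]; push_cast; ring)
    · exact Or.inr (by simp only [← h]; push_cast; ring)

lemma connOn_arc (s : ZMod N) {l : ℕ} (hl : l < N) : ConnOn (cadj N) (arc s l) := by
  rcases l with _ | m
  · intro x hx
    simp at hx
  · exact (isPathOn_arc s hl).connOn

lemma calI1_arc (s : ZMod N) {l : ℕ} (hl : Odd l) (hlN : l < N) : CalI1 (cadj N) (arc s l) := by
  obtain ⟨k, rfl⟩ := hl
  exact ⟨isPathOn_arc s hlN, by rw [card_arc s hlN.le]; exact odd_two_mul_add_one k⟩

lemma exists_eq_arc_of_isPathOn (hN : 3 ≤ N) {I : Finset (ZMod N)} (h : IsPathOn (cadj N) I) :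
    ∃ a, I = arc a I.card ∧ I.card < N := by
  obtain ⟨m, f, hinj, rfl, hadj⟩ := h
  obtain ⟨δ, hδ, hf⟩ := exists_step_of_isPathOn hinj hadj
  have hcard : (univ.image f).card = m + 1 := by
    rw [card_image_of_injective _ hinj, card_univ, Fintype.card_fin]
  have hle : m + 1 ≤ N := by
    simpa [hcard, ZMod.card] using card_le_univ (univ.image f)
  have hlt : m + 1 < N := by
    refine lt_of_le_of_ne hle fun hmN => ?_
    have hm : ((m : ℕ) : ZMod N) = -1 := by
      rw [eq_neg_iff_add_eq_zero, ← Nat.cast_add_one, hmN, ZMod.natCast_self]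
    have : cadj N (f (Fin.last m)) (f 0) := by
      rw [hf (Fin.last m), Fin.val_last, hm]
      rcases hδ with rfl | rfl
      · exact Or.inl (by ring)
      · exact Or.inr (by ring)
    have := (hadj _ _).1 this
    simp at this
    omega
  rw [hcard]
  rcases hδ with rfl | rfl
  · refine ⟨f 0, ?_, hlt⟩
    rw [← image_add_natCast_eq_arc (f 0) (by omega)]
    congr 1
    funext i
    rw [hf i, mul_one]
  · refine ⟨f 0 - (m : ZMod N), ?_, hlt⟩
    rw [← image_add_natCast_eq_arc (f 0 - (m : ZMod N)) (by omega)]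
    conv_lhs => rw [← image_univ_of_surjective Fin.rev_surjective, image_image]
    congr 1
    funext i
    rw [Function.comp_apply, hf, Fin.val_rev, Nat.cast_sub (by omega)]
    push_cast
    ring

lemma exists_eq_arc_of_calI1 (hN : 3 ≤ N) (hodd : Odd N) {I : Finset (ZMod N)}
    (h : CalI1 (cadj N) I) : ∃ a l, Odd l ∧ l + 2 ≤ N ∧ I = arc a l := by
  obtain ⟨a, ha, hlt⟩ := exists_eq_arc_of_isPathOn hN h.1
  refine ⟨a, I.card, h.2, ?_, ha⟩
  have := Nat.odd_iff.1 h.2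
  have := Nat.odd_iff.1 hodd
  omega

/-- Removing `x` leaves the odd arcs before and after it, separated by the gap at `x`. -/
lemma mem_Iev_arc {s x : ZMod N} {l : ℕ} (hl : Odd l) (hlN : l + 2 ≤ N)
    (hx : Odd (x - s).val) (hxl : (x - s).val + 2 ≤ l) : x ∈ Iev (cadj N) (arc s l) := by
  have hN : 2 ≤ N := by omega
  have hl2 := Nat.odd_iff.1 hl
  have hx2 := Nat.odd_iff.1 hx
  have hx1 : (x + 1 - s).val = (x - s).val + 1 := by
    rcases val_add_one_sub hN x s with h | h <;> omega
  have hpos : ∀ z, (z - s).val = (z - (x + 1)).val + ((x - s).val + 1) ∨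
      (z - s).val + N = (z - (x + 1)).val + ((x - s).val + 1) :=
    fun z => hx1 ▸ val_sub_add_val_sub z (x + 1) s
  have hdisj : Disjoint (arc s (x - s).val) (arc (x + 1) (l - 1 - (x - s).val)) := by
    refine disjoint_left.2 fun z hz hz' => ?_
    rw [mem_arc] at hz hz'
    have := hpos z
    omega
  refine ⟨by rw [mem_arc]; omega, arc s (x - s).val, arc (x + 1) (l - 1 - (x - s).val),
    calI1_arc s hx (by omega), calI1_arc _ (Nat.odd_iff.2 (by omega)) (by omega),
    ⟨disjoint_iff_inter_eq_empty.1 hdisj, ?_⟩, ?_⟩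
  · refine not_connOn_union hdisj (fun y hy z hz hyz => ?_) (a := s) (b := x + 1)
      (by rw [mem_arc, sub_self, ZMod.val_zero]; omega)
      (by rw [mem_arc, sub_self, ZMod.val_zero]; omega)
    rw [mem_arc] at hy hz
    have := val_sub_of_cadj hN hyz s
    have := hpos z
    omega
  · ext z
    have hzx : z = x ↔ (z - s).val = (x - s).val :=
      ((ZMod.val_injective N).eq_iff.trans sub_left_inj).symm
    have := hpos z
    have := ZMod.val_lt (z - (x + 1))
    simp only [mem_erase, mem_union, mem_arc, ne_eq, hzx]
    omega

lemma val_sub_of_prec_arc {a b : ZMod N} {la lb : ℕ} (hla : 0 < la) (hlb : lb < N)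
    (h : Prec (cadj N) (arc a la) (arc b lb)) : 0 < (a - b).val ∧ (a - b).val + la < lb := by
  obtain ⟨hsub, hnconn⟩ := h
  have hpos : ∀ z, (z - b).val = (z - a).val + (a - b).val ∨
      (z - b).val + N = (z - a).val + (a - b).val := fun z => val_sub_add_val_sub z a b
  have hab : (a - b).val < lb := by
    have := hsub.subset (show a ∈ arc a la by rw [mem_arc, sub_self, ZMod.val_zero]; exact hla)
    rwa [mem_arc] at this
  have hle : (a - b).val + la ≤ lb := by
    by_contra hcon
    have hz := val_natCast_sub b hlb
    have := hpos (b + (lb : ZMod N))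
    have := ZMod.val_lt (b + (lb : ZMod N) - a)
    have := hsub.subset (show b + (lb : ZMod N) ∈ arc a la by rw [mem_arc]; omega)
    rw [mem_arc] at this
    omega
  refine ⟨Nat.pos_of_ne_zero fun h0 => hnconn ?_, lt_of_le_of_ne hle fun heq => hnconn ?_⟩
  · have hz := val_natCast_sub b (show la < N by omega)
    have : arc b lb \ arc a la = arc (b + (la : ZMod N)) (lb - la) := by
      ext z
      have := hpos z
      have := val_sub_add_val_sub z (b + (la : ZMod N)) b
      have := ZMod.val_lt (z - (b + (la : ZMod N)))
      have := ZMod.val_lt (z - b)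
      have := ZMod.val_lt (z - a)
      simp only [mem_sdiff, mem_arc]
      omega
    rw [this]
    exact connOn_arc _ (by omega)
  · have : arc b lb \ arc a la = arc b (a - b).val := by
      ext z
      have := hpos z
      have := ZMod.val_lt (z - b)
      have := ZMod.val_lt (z - a)
      simp only [mem_sdiff, mem_arc]
      omega
    rw [this]
    exact connOn_arc _ (by omega)

lemma mem_of_prec_of_cadj (hN : 3 ≤ N) (hodd : Odd N) {I I' : Finset (ZMod N)}
    (hI : CalI1 (cadj N) I) (hI' : CalI1 (cadj N) I') (h : Prec (cadj N) I I')
    {x y : ZMod N} (hy : y ∈ I) (hx : x ∉ I) (hxy : cadj N x y) : x ∈ I' := by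
  obtain ⟨a, la, hla, hlaN, rfl⟩ := exists_eq_arc_of_calI1 hN hodd hI
  obtain ⟨b, lb, -, hlbN, rfl⟩ := exists_eq_arc_of_calI1 hN hodd hI'
  have := val_sub_of_prec_arc hla.pos (by omega) h
  have := val_sub_add_val_sub y a b
  have := val_sub_add_val_sub x a b
  have := ZMod.val_lt (x - a)
  have := val_sub_of_cadj (by omega) hxy a
  have := ZMod.val_lt (x - b)
  have := ZMod.val_lt (y - b)
  rw [mem_arc] at hx hy ⊢
  omega

/-- Of two adjacent vertices of an odd arc, one sits at an odd position. -/
lemma exists_mem_Iev_of_pair_subset (hN : 3 ≤ N) (hodd : Odd N) {K : Finset (ZMod N)}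
    (hK : CalI1 (cadj N) K) {t t' : ZMod N} (htt' : cadj N t t') (hsub : {t, t'} ⊆ K) :
    ∃ v ∈ ({t, t'} : Finset (ZMod N)), v ∈ Iev (cadj N) K := by
  obtain ⟨a, l, hl, hlN, rfl⟩ := exists_eq_arc_of_calI1 hN hodd hK
  have ht : (t - a).val < l := mem_arc.1 (hsub (mem_insert_self _ _))
  have ht' : (t' - a).val < l := mem_arc.1 (hsub (by simp))
  have := val_sub_of_cadj (by omega) htt' a
  have := Nat.odd_iff.1 hl
  rcases Nat.even_or_odd (t - a).val with he | ho
  · have := Nat.even_iff.1 he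
    exact ⟨t', by simp, mem_Iev_arc hl hlN (Nat.odd_iff.2 (by omega)) (by omega)⟩
  · have := Nat.odd_iff.1 ho
    exact ⟨t, mem_insert_self _ _, mem_Iev_arc hl hlN ho (by omega)⟩

/-- The vertex just past the shorter arc sits at an odd position of the longer one. -/
lemma exists_cadj_mem_Iev_of_common_end (hN : 3 ≤ N) (hodd : Odd N) {J J' : Finset (ZMod N)}
    (hJ : CalI1 (cadj N) J) (hJ' : CalI1 (cadj N) J') {v w : ZMod N} (hvw : cadj N v w)
    (hv : v ∈ J) (hv' : v ∈ J') (hw : w ∉ J) (hw' : w ∉ J') (hle : J.card ≤ J'.card)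
    (hne : J ≠ J') : ∃ x y, cadj N x y ∧ y ∈ J ∧ x ∉ J ∧ x ∈ Iev (cadj N) J' := by
  obtain ⟨a, l, hl, hlN, rfl⟩ := exists_eq_arc_of_calI1 hN hodd hJ
  obtain ⟨a', l', hl', hl'N, rfl⟩ := exists_eq_arc_of_calI1 hN hodd hJ'
  rw [card_arc a (by omega), card_arc a' (by omega)] at hle
  rw [mem_arc] at hv hv' hw hw'
  have := Nat.odd_iff.1 hl
  have := Nat.odd_iff.1 hl'
  rcases hvw with rfl | rfl
  · -- `v` is the last vertex of both arcs; take `x = a - 1`, just before the shorter arc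
    have := val_add_one_sub (by omega) v a
    have := val_add_one_sub (by omega) v a'
    have := val_sub_add_val_sub v a a'
    have := ZMod.val_lt (a - a')
    have hlt : l < l' := lt_of_le_of_ne hle fun h => hne (by
      rw [show a = a' from sub_eq_zero.1 ((ZMod.val_eq_zero _).1 (by omega)), h])
    have hx := val_add_one_sub (by omega) (a - 1) a
    simp only [sub_add_cancel, sub_self, ZMod.val_zero] at hx
    have := val_sub_add_val_sub (a - 1) a a'
    have := ZMod.val_lt (a - 1 - a')
    refine ⟨a - 1, a, Or.inl (sub_add_cancel a 1).symm, ?_, ?_, mem_Iev_arc hl' hl'N ?_ ?_⟩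
    · rw [mem_arc, sub_self, ZMod.val_zero]
      omega
    · rw [mem_arc]
      omega
    · exact Nat.odd_iff.2 (by omega)
    · omega
  · -- `v` is the first vertex of both arcs; take `x` just after the shorter arc
    have := val_add_one_sub (by omega) w a
    have := val_add_one_sub (by omega) w a'
    obtain rfl : w + 1 = a := sub_eq_zero.1 ((ZMod.val_eq_zero _).1 (by omega))
    obtain rfl : w + 1 = a' := sub_eq_zero.1 ((ZMod.val_eq_zero _).1 (by omega))
    have hlt : l < l' := lt_of_le_of_ne hle fun h => hne (by rw [h])
    have hx := val_natCast_sub (w + 1) (show l < N by omega)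
    have hy := val_add_one_sub (by omega) (w + 1 + (l : ZMod N) - 1) (w + 1)
    rw [sub_add_cancel, hx] at hy
    refine ⟨w + 1 + (l : ZMod N), w + 1 + (l : ZMod N) - 1, Or.inr (sub_add_cancel _ 1).symm,
      ?_, ?_, mem_Iev_arc hl' hl'N (by rw [hx]; exact hl) (by omega)⟩
    · rw [mem_arc]
      omega
    · rw [mem_arc, hx]
      omega

lemma eq_of_cadj_of_not_mem (hN : 3 ≤ N) (hodd : Odd N) {B : Finset (Finset (ZMod N))}
    (hB : B ∈ phiSet (cadj N)) {X Y : Finset (ZMod N)} (hX : X ∈ B) (hY : Y ∈ B)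
    {x y : ZMod N} (hyX : y ∈ X) (hyY : y ∈ Y) (hxX : x ∉ X) (hxY : x ∉ Y)
    (hxy : cadj N x y) : X = Y := by
  rcases hB.2.1 X hX Y hY with h | hsp | hpr | hpr
  · exact h
  · exact absurd (hsp.1 ▸ mem_inter.2 ⟨hyX, hyY⟩) (notMem_empty y)
  · exact absurd (mem_of_prec_of_cadj hN hodd (hB.1 X hX) (hB.1 Y hY) hpr hyX hxX hxy) hxY
  · exact absurd (mem_of_prec_of_cadj hN hodd (hB.1 Y hY) (hB.1 X hX) hpr hyY hxY hxy) hxX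

lemma eq_of_card_inter_eq_one (hN : 3 ≤ N) (hodd : Odd N) {t t' : ZMod N} (htt' : cadj N t t')
    {B : Finset (Finset (ZMod N))} (hB : B ∈ phiSet (cadj N)) {I₁ I₂ : Finset (ZMod N)}
    (hI₁ : I₁ ∈ B) (h₁ : (I₁ ∩ {t, t'}).card = 1) (hI₂ : I₂ ∈ B)
    (h₂ : (I₂ ∩ {t, t'}).card = 1) : I₁ = I₂ := by
  have hne := ne_of_cadj (by omega) htt'
  rcases (card_inter_pair_eq_one_iff hne).1 h₁ with ⟨ht₁, ht'₁⟩ | ⟨ht'₁, ht₁⟩ <;>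
    rcases (card_inter_pair_eq_one_iff hne).1 h₂ with ⟨ht₂, ht'₂⟩ | ⟨ht'₂, ht₂⟩
  · exact eq_of_cadj_of_not_mem hN hodd hB hI₁ hI₂ ht₁ ht₂ ht'₁ ht'₂ (cadj_symm htt')
  · exact absurd ((ssubset_of_adj (fun _ _ => cadj_symm) hB hI₁ hI₂ ht₁ ht'₂ ht'₁
      (cadj_symm htt')).subset ht₁) ht₂
  · exact absurd ((ssubset_of_adj (fun _ _ => cadj_symm) hB hI₁ hI₂ ht'₁ ht₂ ht₁
      htt').subset ht'₁) ht'₂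
  · exact eq_of_cadj_of_not_mem hN hodd hB hI₁ hI₂ ht'₁ ht'₂ ht₁ ht₂ htt'

lemma exists_card_inter_eq_one (hN : 3 ≤ N) (hodd : Odd N) {t t' : ZMod N} (htt' : cadj N t t')
    {B : Finset (Finset (ZMod N))} (hB : B ∈ phiSet (cadj N))
    (hsupp : (suppB B ∩ {t, t'}).Nonempty) : ∃ I ∈ B, (I ∩ {t, t'}).card = 1 := by
  have hee : ({t, t'} : Finset (ZMod N)).card = 2 := card_pair (ne_of_cadj (by omega) htt')
  obtain ⟨x, hx⟩ := hsupp
  obtain ⟨hxsupp, hxee⟩ := mem_inter.1 hx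
  obtain ⟨I₀, hI₀, hxI₀⟩ := mem_biUnion.1 hxsupp
  by_contra hno
  push Not at hno
  obtain ⟨K₀, hK₀⟩ := exists_minimal_of_wellFoundedLT (fun K => K ∈ B ∧ {t, t'} ⊆ K)
    ⟨I₀, hI₀, subset_of_card_inter_ne_one hee hxI₀ hxee (hno I₀ hI₀)⟩
  obtain ⟨v, hvee, hvK₀⟩ :=
    exists_mem_Iev_of_pair_subset hN hodd (hB.1 K₀ hK₀.1.1) htt' hK₀.1.2
  obtain ⟨I, hI, -, hcI, -⟩ := exists_card_inter_eq_one_of_minimal hB.2.2 hee hK₀ hvK₀ hvee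
  exact hno I hI hcI

lemma false_of_erase_eq_of_card_le (hN : 3 ≤ N) (hodd : Odd N) {ee : Finset (ZMod N)}
    (hee : ee.card = 2) {B₁ B₂ : Finset (Finset (ZMod N))} (hB₁ : B₁ ∈ phiSet (cadj N))
    (hB₂ : B₂ ∈ phiSet (cadj N)) {J₁ J₂ K₀ : Finset (ZMod N)} (hJ₁ : J₁ ∈ B₁)
    (hJ₂ : J₂ ∈ B₂) (hJ₂_unique : ∀ X ∈ B₂, (X ∩ ee).card = 1 → X = J₂)
    (hC : B₁.erase J₁ = B₂.erase J₂)
    (hK₀ : Minimal (fun K => K ∈ B₂ ∧ ee ⊆ K) K₀) (hJ₂K₀ : Prec (cadj N) J₂ K₀)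
    {v w : ZMod N} (hvee : v ∈ ee) (hvw : cadj N v w) (hv₁ : v ∈ J₁) (hv₂ : v ∈ J₂)
    (hw₁ : w ∉ J₁) (hw₂ : w ∉ J₂) (hle : J₁.card ≤ J₂.card) (hne : J₁ ≠ J₂) :
    False := by
  obtain ⟨x, y, hxy, hyJ₁, hxJ₁, hxJ₂⟩ := exists_cadj_mem_Iev_of_common_end hN hodd
    (hB₁.1 J₁ hJ₁) (hB₂.1 J₂ hJ₂) hvw hv₁ hv₂ hw₁ hw₂ hle hne
  obtain ⟨X, hXB₂, hXJ₂, hxX⟩ := exists_mem_prec_of_mem_Iev hB₂.2.2 hJ₂ hxJ₂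
  have hXB₁ : X ∈ B₁ := mem_of_mem_erase (hC ▸ mem_erase.2 ⟨hXJ₂.1.ne, hXB₂⟩)
  have hvX : v ∈ X :=
    (ssubset_of_adj (fun _ _ => cadj_symm) hB₁ hJ₁ hXB₁ hyJ₁ hxX hxJ₁ hxy).subset hv₁
  have heeX : ee ⊆ X :=
    subset_of_card_inter_ne_one hee hvX hvee fun h => hXJ₂.1.ne (hJ₂_unique X hXB₂ h)
  exact hK₀.not_lt ⟨hXB₂, heeX⟩ (hXJ₂.1.trans hJ₂K₀.1)

lemma eq_of_erase_eq (hN : 3 ≤ N) (hodd : Odd N) {t t' : ZMod N} (htt' : cadj N t t')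
    {B B' : Finset (Finset (ZMod N))} (hB : B ∈ phiSet (cadj N)) (hB' : B' ∈ phiSet (cadj N))
    {J J' : Finset (ZMod N)} (hJ : J ∈ B) (hJ' : J' ∈ B') (hc : (J ∩ {t, t'}).card = 1)
    (hc' : (J' ∩ {t, t'}).card = 1) (hC : B.erase J = B'.erase J')
    (hn : Odd (nB {t, t'} B)) : J = J' := by
  by_contra hne
  have hee : ({t, t'} : Finset (ZMod N)).card = 2 := card_pair (ne_of_cadj (by omega) htt')
  have hJee := not_subset_of_card_inter_eq_one hee hc
  have hJ'ee := not_subset_of_card_inter_eq_one hee hc'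
  have hnC : Odd (nB {t, t'} (B.erase J)) := by rwa [nB_erase hJee]
  obtain ⟨K₀, hK₀⟩ := exists_minimal_of_wellFoundedLT
    (fun K => K ∈ B.erase J ∧ {t, t'} ⊆ K) (exists_subset_of_odd_nB hnC)
  have hmin := minimal_of_minimal_erase hJee hK₀
  have hmin' := minimal_of_minimal_erase hJ'ee (hC ▸ hK₀)
  obtain ⟨v, hvee, hvK₀⟩ :=
    exists_mem_Iev_of_pair_subset hN hodd (hB.1 K₀ hmin.1.1) htt' hmin.1.2
  obtain ⟨I, hI, hvI, hcI, hIK₀⟩ :=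
    exists_card_inter_eq_one_of_minimal hB.2.2 hee hmin hvK₀ hvee
  obtain ⟨I', hI', hvI', hcI', hI'K₀⟩ :=
    exists_card_inter_eq_one_of_minimal hB'.2.2 hee hmin' hvK₀ hvee
  obtain rfl := eq_of_card_inter_eq_one hN hodd htt' hB hI hcI hJ hc
  obtain rfl := eq_of_card_inter_eq_one hN hodd htt' hB' hI' hcI' hJ' hc'
  obtain ⟨w, hvw, hvw_ee⟩ : ∃ w, cadj N v w ∧ ({t, t'} : Finset (ZMod N)) = {v, w} := by
    rcases mem_insert.1 hvee with rfl | hv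
    · exact ⟨t', htt', rfl⟩
    · rw [mem_singleton.1 hv]
      exact ⟨t, cadj_symm htt', pair_comm _ _⟩
  have hw : ∀ {X : Finset (ZMod N)}, v ∈ X → (X ∩ {t, t'}).card = 1 → w ∉ X := by
    intro X hvX hcX
    rw [hvw_ee, card_inter_pair_eq_one_iff (ne_of_cadj (by omega) hvw)] at hcX
    exact hcX.elim And.right fun h => absurd hvX h.2
  rcases le_total I.card I'.card with hle | hle
  · exact false_of_erase_eq_of_card_le hN hodd hee hB hB' hI hI'
      (fun X hX hcX => eq_of_card_inter_eq_one hN hodd htt' hB' hX hcX hI' hcI') hC hmin' hI'K₀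
      hvee hvw hvI hvI' (hw hvI hcI) (hw hvI' hcI') hle hne
  · exact false_of_erase_eq_of_card_le hN hodd hee hB' hB hI' hI
      (fun X hX hcX => eq_of_card_inter_eq_one hN hodd htt' hB hX hcX hI hcI) hC.symm hmin hIK₀
      hvee hvw hvI' hvI (hw hvI' hcI') (hw hvI hcI) hle (Ne.symm hne)

lemma bangF_of_odd_of_mem_phiSet (hN : 3 ≤ N) (hodd : Odd N) {t t' : ZMod N}
    (htt' : cadj N t t') {B : Finset (Finset (ZMod N))} (hB : B ∈ phiSet (cadj N))
    (hn : Odd (nB {t, t'} B)) :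
    ∃ J ∈ B, (J ∩ {t, t'}).card = 1 ∧ bangF {t, t'} B = B.erase J := by
  obtain ⟨K, hKB, hKee⟩ := exists_subset_of_odd_nB hn
  have ht : t ∈ ({t, t'} : Finset (ZMod N)) := mem_insert_self t {t'}
  exact bangF_of_odd hn (exists_card_inter_eq_one hN hodd htt' hB
    ⟨t, mem_inter.2 ⟨mem_biUnion.2 ⟨K, hKB, hKee ht⟩, ht⟩⟩)

lemma injOn_bangF (hN : 3 ≤ N) (hodd : Odd N) {t t' : ZMod N} (htt' : cadj N t t') :
    Set.InjOn (bangF {t, t'}) (phiSet (cadj N)) := by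
  intro B hB B' hB' h
  have hee : ({t, t'} : Finset (ZMod N)).card = 2 := card_pair (ne_of_cadj (by omega) htt')
  have hn : nB {t, t'} B = nB {t, t'} B' := by rw [← nB_bangF hee, h, nB_bangF hee]
  by_cases hB_odd : Odd (nB {t, t'} B)
  · obtain ⟨J, hJ, hc, hBJ⟩ := bangF_of_odd_of_mem_phiSet hN hodd htt' hB hB_odd
    obtain ⟨J', hJ', hc', hBJ'⟩ := bangF_of_odd_of_mem_phiSet hN hodd htt' hB' (hn ▸ hB_odd)
    rw [hBJ, hBJ'] at h
    obtain rfl := eq_of_erase_eq hN hodd htt' hB hB' hJ hJ' hc hc' h hB_odd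
    rw [← insert_erase hJ, h, insert_erase hJ']
  · rwa [bangF_of_not_odd hB_odd, bangF_of_not_odd (hn ▸ hB_odd)] at h

end OddCycle

/-- for `B ∈ phi` with `supp(B) ∩ ee ≠ ∅` there is a unique `I ∈ B` with
`|I ∩ ee| = 1`; the map `B ↦ B^!` is injective on `phi`, hence a bijection onto
`omega = {B^! : B ∈ phi}`. -/
theorem statement16 (N : ℕ) [NeZero N] (hN : 3 ≤ N) (hodd : Odd N)
    (t t' : ZMod N) (hadj : cadj N t t') :
    (∀ B ∈ phiSet (cadj N), (suppB B ∩ ({t, t'} : Finset (ZMod N))).Nonempty →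
      ∃! I : Finset (ZMod N), I ∈ B ∧ (I ∩ ({t, t'} : Finset (ZMod N))).card = 1) ∧
    Set.InjOn (bangF ({t, t'} : Finset (ZMod N))) (phiSet (cadj N)) ∧
    Set.BijOn (bangF ({t, t'} : Finset (ZMod N))) (phiSet (cadj N))
      (omegaSet (cadj N) ({t, t'} : Finset (ZMod N))) := by
  have hinj := OddCycle.injOn_bangF hN hodd hadj
  refine ⟨fun B hB hsupp => ?_, hinj, hinj.bijOn_image⟩
  obtain ⟨J, hJ, hc⟩ := OddCycle.exists_card_inter_eq_one hN hodd hadj hB hsupp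
  exact ⟨J, ⟨hJ, hc⟩,
    fun I hI => OddCycle.eq_of_card_inter_eq_one hN hodd hadj hB hI.1 hI.2 hJ hc⟩
end

section
/- Let N ≥ 3 be odd, (S,E) the cycle of length N, Vbar = V/(F·e_S), and fix an edge ee in E. Let B in phi(Vbar). If n_B is odd, then z_ee(eps(B)) = 0; if n_B is even and n_B ≥ 2, then z_ee(eps(B)) = 1. -/
/-
Members of `B` are odd arcs of the cycle. Write `ee = {t, t + 1}` and `n = n_B`. At most one
member of `B` contains `t` but not `t + 1` (two such arcs end at `t`, so they meet and neither is
`≺` the other), likewise for `t + 1` but not `t`, and the two kinds exclude each other (they would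
be `♠` although their union is an arc). If `n ≥ 1`, a minimal member of `B` containing `ee` is an
odd arc through `ee`, so an end of `ee` lies in its `I^{ev}`, and (P1) yields a smaller member of
`B` meeting `ee` in exactly one point. Hence `{g_t, g_{t+1}} = {n, n + 1}` and
`z_ee(eps B) = T(n) + T(n + 1) = (n + 1)² ≡ n + 1 (mod 2)`, where `T(k) = k(k + 1)/2`.
-/

lemma not_connOn_union_s18 {S : Type} [DecidableEq S] {adj : S → S → Prop} {A C : Finset S}
    {a c : S} (ha : a ∈ A) (hc : c ∈ C) (hAC : Disjoint A C)
    (hno : ∀ x ∈ A, ∀ y ∈ C, ¬ adj x y) : ¬ ConnOn adj (A ∪ C) := by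
  intro hconn
  have hstay : ∀ y, Relation.ReflTransGen (fun x y => x ∈ A ∪ C ∧ y ∈ A ∪ C ∧ adj x y) a y →
      y ∈ A := by
    intro y hy
    induction hy with
    | refl => exact ha
    | tail _ hyz ih =>
      obtain ⟨-, hz, hyz⟩ := hyz
      exact (Finset.mem_union.mp hz).resolve_right fun hz => hno _ ih _ hz hyz
  exact Finset.disjoint_left.mp hAC
    (hstay c (hconn a (Finset.mem_union_left _ ha) c (Finset.mem_union_right _ hc))) hc

lemma P0.eq_of_inter_nonempty {S : Type} [DecidableEq S] {adj : S → S → Prop}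
    {B : Finset (Finset S)} (hB : P0 adj B) {I J : Finset S} (hI : I ∈ B) (hJ : J ∈ B)
    (hIJ : (I ∩ J).Nonempty) (hnIJ : ¬ Prec adj I J) (hnJI : ¬ Prec adj J I) : I = J := by
  rcases hB I hI J hJ with h | h | h | h
  exacts [h, absurd h.1 hIJ.ne_empty, absurd h hnIJ, absurd h hnJI]

lemma gs_eq_card_filter_add_card_filter {S : Type} [DecidableEq S] (B : Finset (Finset S))
    (s u : S) : gs B s = (B.filter fun I => s ∈ I ∧ u ∈ I).card +
      (B.filter fun I => s ∈ I ∧ u ∉ I).card := by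
  rw [gs, ← Finset.card_filter_add_card_filter_not (fun I => u ∈ I), Finset.filter_filter,
    Finset.filter_filter]

lemma nB_pair {S : Type} [DecidableEq S] (B : Finset (Finset S)) (s u : S) :
    nB {s, u} B = (B.filter fun I => s ∈ I ∧ u ∈ I).card := by
  simp [nB, Finset.insert_subset_iff]

lemma natCast_triangle_add_triangle_succ (n : ℕ) :
    ((n * (n + 1) / 2 : ℕ) : ZMod 2) + (((n + 1) * (n + 1 + 1) / 2 : ℕ) : ZMod 2) = n + 1 := by
  have hsum : n * (n + 1) / 2 + (n + 1) * (n + 1 + 1) / 2 = n * (n + 1) + (n + 1) := by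
    have h := Nat.even_mul_succ_self n
    rw [show (n + 1) * (n + 1 + 1) = n * (n + 1) + 2 * (n + 1) by ring]
    generalize n * (n + 1) = a at h ⊢
    obtain ⟨b, rfl⟩ := h
    omega
  rw [← Nat.cast_add, hsum, Nat.cast_add, (Nat.even_mul_succ_self n).natCast_zmod_two, zero_add,
    Nat.cast_add_one]

namespace Cycle

variable {N : ℕ}

def arc (c : ZMod N) (a b : ℕ) : Finset (ZMod N) :=
  (Finset.Ico a b).image fun i : ℕ => c + (i : ZMod N)

lemma mem_arc {c x : ZMod N} {a b : ℕ} : x ∈ arc c a b ↔ ∃ i, (a ≤ i ∧ i < b) ∧ c + i = x := by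
  simp [arc]

lemma add_natCast_inj {c : ZMod N} {i j : ℕ} (hi : i < N) (hj : j < N) :
    c + (i : ZMod N) = c + j ↔ i = j := by
  rw [add_right_inj, ZMod.natCast_eq_natCast_iff', Nat.mod_eq_of_lt hi, Nat.mod_eq_of_lt hj]

lemma injOn_add_natCast (c : ZMod N) {a b : ℕ} (hb : b ≤ N) :
    Set.InjOn (fun i : ℕ => c + (i : ZMod N)) (Finset.Ico a b) := by
  intro i hi j hj h
  simp only [Finset.coe_Ico, Set.mem_Ico] at hi hj
  exact (add_natCast_inj (by omega) (by omega)).mp h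

lemma arc_add_natCast (c : ZMod N) (k a b : ℕ) :
    arc (c + (k : ZMod N)) a b = arc c (a + k) (b + k) := by
  ext x
  simp only [mem_arc]
  constructor
  · rintro ⟨i, hi, rfl⟩
    exact ⟨i + k, by omega, by push_cast; ring⟩
  · rintro ⟨j, hj, rfl⟩
    exact ⟨j - k, by omega, by rw [Nat.cast_sub (by omega)]; ring⟩

lemma arc_eq_arc_zero (c : ZMod N) {a b : ℕ} (hab : a ≤ b) :
    arc c a b = arc (c + (a : ZMod N)) 0 (b - a) := by
  rw [arc_add_natCast, zero_add, Nat.sub_add_cancel hab]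

lemma arc_add_self (c : ZMod N) (a b : ℕ) : arc c (a + N) (b + N) = arc c a b := by
  rw [← arc_add_natCast, ZMod.natCast_self, add_zero]

lemma card_arc (c : ZMod N) {a b : ℕ} (hb : b ≤ N) : (arc c a b).card = b - a := by
  rw [arc, Finset.card_image_of_injOn (injOn_add_natCast c hb), Nat.card_Ico]

lemma arc_union_arc (c : ZMod N) {a b d : ℕ} (hab : a ≤ b) (hbd : b ≤ d) :
    arc c a b ∪ arc c b d = arc c a d := by
  rw [arc, arc, ← Finset.image_union, Finset.Ico_union_Ico_eq_Ico hab hbd, arc]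

lemma arc_sdiff_arc_left (c : ZMod N) {a b d : ℕ} (hab : a ≤ b) (hbd : b ≤ d) (hd : d ≤ N) :
    arc c a d \ arc c a b = arc c b d := by
  rw [arc, arc, ← Finset.image_sdiff_of_injOn (injOn_add_natCast c hd)
    (Finset.Ico_subset_Ico_right hbd), Finset.Ico_sdiff_Ico_left, max_eq_right hab, arc]

lemma arc_sdiff_arc_right (c : ZMod N) {a b d : ℕ} (hab : a ≤ b) (hbd : b ≤ d) (hd : d ≤ N) :
    arc c a d \ arc c b d = arc c a b := by
  rw [arc, arc, ← Finset.image_sdiff_of_injOn (injOn_add_natCast c hd)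
    (Finset.Ico_subset_Ico_left hab), Finset.Ico_sdiff_Ico_right, min_eq_right hbd, arc]

lemma disjoint_arc_arc (c : ZMod N) {a b b' d : ℕ} (hb : b ≤ b') (hd : d ≤ N) :
    Disjoint (arc c a b) (arc c b' d) := by
  rw [Finset.disjoint_left]
  rintro _ hx hx'
  obtain ⟨i, hi, rfl⟩ := mem_arc.mp hx
  obtain ⟨j, hj, hij⟩ := mem_arc.mp hx'
  have := (add_natCast_inj (by omega) (by omega)).mp hij
  omega

lemma arc_erase (c : ZMod N) {a b d : ℕ} (hab : a ≤ b) (hbd : b < d) (hd : d ≤ N) :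
    (arc c a d).erase (c + (b : ZMod N)) = arc c a b ∪ arc c (b + 1) d := by
  ext x
  simp only [Finset.mem_erase, Finset.mem_union, mem_arc]
  constructor
  · rintro ⟨hx, i, hi, rfl⟩
    have : i ≠ b := fun h => hx (h ▸ rfl)
    by_cases hib : i < b
    exacts [Or.inl ⟨i, by omega, rfl⟩, Or.inr ⟨i, by omega, rfl⟩]
  · rintro (⟨i, hi, rfl⟩ | ⟨i, hi, rfl⟩) <;>
      refine ⟨fun h => ?_, i, by omega, rfl⟩ <;>
      have := (add_natCast_inj (by omega) (by omega)).mp h <;> omega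

lemma connOn_arc (c : ZMod N) (a b : ℕ) : ConnOn (cadj N) (arc c a b) := by
  set R := fun x y => x ∈ arc c a b ∧ y ∈ arc c a b ∧ cadj N x y
  have : Std.Symm R := ⟨fun x y ⟨hx, hy, h⟩ => ⟨hy, hx, Or.symm h⟩⟩
  have hreach : ∀ i, a ≤ i → i < b → Relation.ReflTransGen R (c + (a : ZMod N)) (c + i) := by
    intro i hai hib
    induction i, hai using Nat.le_induction with
    | base => rfl
    | succ i hai ih =>
      exact (ih (by omega)).tail ⟨mem_arc.mpr ⟨i, ⟨hai, by omega⟩, rfl⟩,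
        mem_arc.mpr ⟨i + 1, ⟨by omega, hib⟩, rfl⟩, Or.inl (by push_cast; ring)⟩
  intro x hx y hy
  obtain ⟨i, hi, rfl⟩ := mem_arc.mp hx
  obtain ⟨j, hj, rfl⟩ := mem_arc.mp hy
  exact (Std.Symm.symm _ _ (hreach i hi.1 hi.2)).trans (hreach j hj.1 hj.2)

lemma not_connOn_arc_union_arc (c : ZMod N) {a b d : ℕ} (hab : a < b) (hbd : b + 1 < d)
    (hd : d < N) : ¬ ConnOn (cadj N) (arc c a b ∪ arc c (b + 1) d) := by
  refine not_connOn_union_s18 (mem_arc.mpr ⟨a, ⟨le_rfl, hab⟩, rfl⟩)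
    (mem_arc.mpr ⟨b + 1, ⟨le_rfl, hbd⟩, rfl⟩) (disjoint_arc_arc c b.le_succ hd.le) ?_
  rintro _ hx _ hy (h | h)
  all_goals
    obtain ⟨i, hi, rfl⟩ := mem_arc.mp hx
    obtain ⟨j, hj, rfl⟩ := mem_arc.mp hy
    rw [add_assoc, ← Nat.cast_add_one, add_natCast_inj (by omega) (by omega)] at h
    omega

lemma isPathOn_arc (c : ZMod N) {a b : ℕ} (hab : a < b) (hba : b - a < N) :
    IsPathOn (cadj N) (arc c a b) := by
  rw [arc_eq_arc_zero c hab.le]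
  obtain ⟨m, hm⟩ : ∃ m, b - a = m + 1 := ⟨b - a - 1, by omega⟩
  rw [hm] at hba ⊢
  refine ⟨m, fun i => c + a + ((i : ℕ) : ZMod N),
    fun i j h => Fin.ext ((add_natCast_inj (by omega) (by omega)).mp h), ?_, fun i j => ?_⟩
  · ext x
    simp only [mem_arc, Finset.mem_image, Finset.mem_univ, true_and]
    constructor
    · rintro ⟨i, hi, rfl⟩
      exact ⟨⟨i, hi.2⟩, rfl⟩
    · rintro ⟨i, rfl⟩
      exact ⟨i, ⟨Nat.zero_le _, i.2⟩, rfl⟩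
  · simp only [cadj]
    rw [add_assoc _ ((i : ℕ) : ZMod N), add_assoc _ ((j : ℕ) : ZMod N), ← Nat.cast_add_one,
      ← Nat.cast_add_one, add_natCast_inj (by omega) (by omega),
      add_natCast_inj (by omega) (by omega)]
    omega

lemma add_natCast_mem_Iev_arc (c : ZMod N) {r k : ℕ} (hr : Odd r) (hk : Odd k) (hrk : r + 1 < k)
    (hkN : k < N) : c + (r : ZMod N) ∈ Iev (cadj N) (arc c 0 k) := by
  rw [Nat.odd_iff] at hr hk
  refine ⟨mem_arc.mpr ⟨r, by omega, rfl⟩, arc c 0 r, arc c (r + 1) k,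
    ⟨isPathOn_arc c (by omega) (by omega), ?_⟩, ⟨isPathOn_arc c hrk (by omega), ?_⟩,
    ⟨Finset.disjoint_iff_inter_eq_empty.mp (disjoint_arc_arc c r.le_succ hkN.le),
      not_connOn_arc_union_arc c (by omega) hrk hkN⟩,
    arc_erase c (Nat.zero_le r) (by omega) hkN.le⟩
  all_goals rw [card_arc c (by omega), Nat.odd_iff]; omega

lemma exists_eq_add_nsmul_of_cadj {m : ℕ} {g : ℕ → ZMod N}
    (hinj : ∀ i ≤ m, ∀ j ≤ m, g i = g j → i = j) (hstep : ∀ i < m, cadj N (g i) (g (i + 1))) :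
    ∃ d : ZMod N, (d = 1 ∨ d = -1) ∧ ∀ i ≤ m, g i = g 0 + i • d := by
  rcases Nat.eq_zero_or_pos m with rfl | hm
  · exact ⟨1, Or.inl rfl, fun i hi => by simp [Nat.le_zero.mp hi]⟩
  obtain ⟨d, hd, h1⟩ : ∃ d : ZMod N, (d = 1 ∨ d = -1) ∧ g 1 = g 0 + d := by
    rcases hstep 0 hm with h | h
    exacts [⟨1, Or.inl rfl, h⟩, ⟨-1, Or.inr rfl, by rw [h]; ring⟩]
  have hsucc : ∀ i, i + 1 ≤ m → g (i + 1) = g i + d := by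
    intro i
    induction i with
    | zero => exact fun _ => h1
    | succ i ih =>
      intro hi
      -- turning back would revisit `g i`
      have hback : g (i + 2) ≠ g (i + 1) - d := fun h => by
        rw [ih (by omega), add_sub_cancel_right] at h
        exact absurd (hinj _ (by omega) _ (by omega) h) (by omega)
      rcases hd with rfl | rfl <;> rcases hstep (i + 1) (by omega) with h | h
      · exact h
      · exact (hback (by rw [h]; ring)).elim
      · exact (hback (by rw [h]; ring)).elim
      · rw [h]; ring
  refine ⟨d, hd, fun i hi => ?_⟩
  induction i with
  | zero => simp
  | succ i ih => rw [hsucc i hi, ih (by omega), succ_nsmul, add_assoc]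

lemma exists_image_add_nsmul_eq_arc (c : ZMod N) {d : ZMod N} (hd : d = 1 ∨ d = -1) (m : ℕ) :
    ∃ c', (Finset.range (m + 1)).image (fun i => c + i • d) = arc c' 0 (m + 1) := by
  rcases hd with rfl | rfl
  · exact ⟨c, by ext x; simp [mem_arc]⟩
  · refine ⟨c - m, ?_⟩
    ext x
    simp only [Finset.mem_image, Finset.mem_range, mem_arc, nsmul_eq_mul, mul_neg, mul_one]
    constructor
    · rintro ⟨i, hi, rfl⟩
      exact ⟨m - i, by omega, by rw [Nat.cast_sub (by omega)]; ring⟩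
    · rintro ⟨i, hi, rfl⟩
      exact ⟨m - i, by omega, by rw [Nat.cast_sub (by omega)]; ring⟩

section

variable [NeZero N]

lemma exists_eq_arc_of_isPathOn (hN : 3 ≤ N) {I : Finset (ZMod N)}
    (hI : IsPathOn (cadj N) I) : ∃ c k, 0 < k ∧ k < N ∧ I = arc c 0 k := by
  obtain ⟨m, f, hinj, rfl, hf⟩ := hI
  have hmN : m + 1 ≤ N := by simpa using Fintype.card_le_of_injective f hinj
  set g : ℕ → ZMod N := fun i => f ⟨min i m, Nat.lt_succ_of_le (min_le_right _ _)⟩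
  have hgf : ∀ i (hi : i ≤ m), g i = f ⟨i, Nat.lt_succ_of_le hi⟩ := fun i hi => by
    simp only [g, min_eq_left hi]
  have hg : ∀ i ≤ m, ∀ j ≤ m, (cadj N (g i) (g j) ↔ i + 1 = j ∨ j + 1 = i) := fun i hi j hj => by
    rw [hgf i hi, hgf j hj, hf]
  have hginj : ∀ i ≤ m, ∀ j ≤ m, g i = g j → i = j := fun i hi j hj h => by
    rw [hgf i hi, hgf j hj] at h
    exact congrArg Fin.val (hinj h)
  obtain ⟨d, hd, hgd⟩ := exists_eq_add_nsmul_of_cadj hginj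
    fun i hi => (hg i hi.le (i + 1) hi).mpr (Or.inl rfl)
  have himage : Finset.image f Finset.univ = (Finset.range (m + 1)).image fun i => g 0 + i • d := by
    ext x
    simp only [Finset.mem_image, Finset.mem_univ, true_and, Finset.mem_range]
    constructor
    · rintro ⟨i, rfl⟩
      exact ⟨i, i.2, by rw [← hgd i (by omega), hgf i (by omega)]⟩
    · rintro ⟨i, hi, rfl⟩
      exact ⟨⟨i, hi⟩, by rw [← hgd i (by omega), hgf i (by omega)]⟩
  -- an enumeration of all of `ZMod N` would close up into the cycle
  have hmN' : m + 1 ≠ N := by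
    intro hm
    have hwrap : g m + d = g 0 := by
      rw [hgd m le_rfl, add_assoc, ← succ_nsmul, hm, ← Nat.cast_smul_eq_nsmul (ZMod N),
        ZMod.natCast_self, zero_smul, add_zero]
    have hclose : cadj N (g m) (g 0) := by
      rcases hd with rfl | rfl
      · exact Or.inl hwrap.symm
      · exact Or.inr (by linear_combination hwrap)
    have := (hg m le_rfl 0 (Nat.zero_le _)).mp hclose
    omega
  obtain ⟨c, hc⟩ := exists_image_add_nsmul_eq_arc (g 0) hd m
  exact ⟨c, m + 1, m.succ_pos, by omega, himage.trans hc⟩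

lemma card_le (I : Finset (ZMod N)) : I.card ≤ N := by
  simpa using I.card_le_univ

/-- Based at `t + 1`, all arcs ending at `t` share their base point. -/
lemma eq_arc_of_succ_notMem (hN : 3 ≤ N) {I : Finset (ZMod N)} {t : ZMod N}
    (hI : IsPathOn (cadj N) I) (ht : t ∈ I) (ht' : t + 1 ∉ I) :
    I = arc (t + 1) (N - I.card) N := by
  obtain ⟨c, k, -, hkN, rfl⟩ := exists_eq_arc_of_isPathOn hN hI
  obtain ⟨i, hi, rfl⟩ := mem_arc.mp ht
  have hik : i + 1 = k := by
    by_contra h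
    exact ht' (mem_arc.mpr ⟨i + 1, by omega, by push_cast; ring⟩)
  rw [card_arc c hkN.le, Nat.sub_zero, add_assoc, ← Nat.cast_add_one, hik, arc_add_natCast,
    Nat.sub_add_cancel hkN.le, add_comm N, ← arc_add_self c 0 k, zero_add]

lemma eq_arc_of_sub_notMem (hN : 3 ≤ N) {I : Finset (ZMod N)} {s : ZMod N}
    (hI : IsPathOn (cadj N) I) (hs : s ∈ I) (hs' : s - 1 ∉ I) : I = arc s 0 I.card := by
  obtain ⟨c, k, -, hkN, rfl⟩ := exists_eq_arc_of_isPathOn hN hI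
  obtain ⟨i, hi, rfl⟩ := mem_arc.mp hs
  obtain rfl : i = 0 := by
    by_contra h
    exact hs' (mem_arc.mpr ⟨i - 1, by omega, by rw [Nat.cast_sub (by omega)]; push_cast; ring⟩)
  rw [card_arc c hkN.le, Nat.sub_zero, Nat.cast_zero, add_zero]

lemma not_prec_of_succ_notMem (hN : 3 ≤ N) {I J : Finset (ZMod N)} {t : ZMod N}
    (hI : IsPathOn (cadj N) I) (hJ : IsPathOn (cadj N) J)
    (htI : t ∈ I) (htI' : t + 1 ∉ I) (htJ : t ∈ J) (htJ' : t + 1 ∉ J) :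
    ¬ Prec (cadj N) I J := by
  rintro ⟨hIJ, hdisc⟩
  have hcard := Finset.card_lt_card hIJ
  have hJN := card_le J
  rw [eq_arc_of_succ_notMem hN hI htI htI', eq_arc_of_succ_notMem hN hJ htJ htJ',
    arc_sdiff_arc_right _ (by omega) (by omega) le_rfl] at hdisc
  exact hdisc (connOn_arc _ _ _)

lemma not_prec_of_sub_notMem (hN : 3 ≤ N) {I J : Finset (ZMod N)} {s : ZMod N}
    (hI : IsPathOn (cadj N) I) (hJ : IsPathOn (cadj N) J)
    (hsI : s ∈ I) (hsI' : s - 1 ∉ I) (hsJ : s ∈ J) (hsJ' : s - 1 ∉ J) :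
    ¬ Prec (cadj N) I J := by
  rintro ⟨hIJ, hdisc⟩
  rw [eq_arc_of_sub_notMem hN hI hsI hsI', eq_arc_of_sub_notMem hN hJ hsJ hsJ',
    arc_sdiff_arc_left _ (Nat.zero_le _) (Finset.card_lt_card hIJ).le (card_le J)] at hdisc
  exact hdisc (connOn_arc _ _ _)

variable {B : Finset (Finset (ZMod N))}

lemma card_filter_mem_succ_notMem_le_one (hN : 3 ≤ N) (hB : B ∈ phiSet (cadj N)) (t : ZMod N) :
    (B.filter fun I => t ∈ I ∧ t + 1 ∉ I).card ≤ 1 := by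
  refine Finset.card_le_one.mpr fun I hI J hJ => ?_
  obtain ⟨hIB, htI, htI'⟩ := Finset.mem_filter.mp hI
  obtain ⟨hJB, htJ, htJ'⟩ := Finset.mem_filter.mp hJ
  have hIp := (hB.1 I hIB).1
  have hJp := (hB.1 J hJB).1
  exact hB.2.1.eq_of_inter_nonempty hIB hJB ⟨t, Finset.mem_inter.mpr ⟨htI, htJ⟩⟩
    (not_prec_of_succ_notMem hN hIp hJp htI htI' htJ htJ')
    (not_prec_of_succ_notMem hN hJp hIp htJ htJ' htI htI')

lemma card_filter_succ_mem_notMem_le_one (hN : 3 ≤ N) (hB : B ∈ phiSet (cadj N)) (t : ZMod N) :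
    (B.filter fun I => t + 1 ∈ I ∧ t ∉ I).card ≤ 1 := by
  refine Finset.card_le_one.mpr fun I hI J hJ => ?_
  obtain ⟨hIB, htI, htI'⟩ := Finset.mem_filter.mp hI
  obtain ⟨hJB, htJ, htJ'⟩ := Finset.mem_filter.mp hJ
  rw [← add_sub_cancel_right t 1] at htI' htJ'
  have hIp := (hB.1 I hIB).1
  have hJp := (hB.1 J hJB).1
  exact hB.2.1.eq_of_inter_nonempty hIB hJB ⟨t + 1, Finset.mem_inter.mpr ⟨htI, htJ⟩⟩
    (not_prec_of_sub_notMem hN hIp hJp htI htI' htJ htJ')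
    (not_prec_of_sub_notMem hN hJp hIp htJ htJ' htI htI')

/-- Otherwise `I` ends at `t` and `J` starts at `t + 1`, so (P0) forces `I ♠ J`, although `I ∪ J`
is an arc. -/
lemma succ_mem_of_mem (hN : 3 ≤ N) (hB : B ∈ phiSet (cadj N)) {I J : Finset (ZMod N)}
    {t : ZMod N} (hI : I ∈ B) (hJ : J ∈ B) (htJ : t + 1 ∈ J) (htJ' : t ∉ J) (htI : t ∈ I) :
    t + 1 ∈ I := by
  by_contra htI'
  rcases hB.2.1 I hI J hJ with rfl | hspade | hprec | hprec
  · exact htJ' htI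
  · refine hspade.2 ?_
    rw [eq_arc_of_succ_notMem hN (hB.1 I hI).1 htI htI', eq_arc_of_sub_notMem hN (hB.1 J hJ).1 htJ
      (by rwa [add_sub_cancel_right]), ← arc_add_self _ 0, zero_add,
      arc_union_arc _ (Nat.sub_le _ _) (Nat.le_add_left _ _)]
    exact connOn_arc _ _ _
  · exact htJ' (hprec.1.subset htI)
  · exact htI' (hprec.1.subset htJ)

/-- A minimal `I ∈ B` containing `t` and `t + 1` is an odd arc, so `t` or `t + 1` lies in `I^{ev}`;
(P1) covers that point by a smaller member of `B`, which cannot contain both. -/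
lemma exists_mem_xor_of_mem (hN : 3 ≤ N) (hB : B ∈ phiSet (cadj N)) {t : ZMod N}
    (h : ∃ I ∈ B, t ∈ I ∧ t + 1 ∈ I) :
    ∃ J ∈ B, Xor (t ∈ J) (t + 1 ∈ J) := by
  obtain ⟨I, hI, hmin⟩ := Finset.exists_min_image (B.filter fun I => t ∈ I ∧ t + 1 ∈ I)
    Finset.card (by simpa [Finset.filter_nonempty_iff] using h)
  obtain ⟨hIB, ht, ht'⟩ := Finset.mem_filter.mp hI
  obtain ⟨c, k, -, hkN, rfl⟩ := exists_eq_arc_of_isPathOn hN (hB.1 _ hIB).1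
  have hk : Odd k := by simpa [card_arc c hkN.le] using (hB.1 _ hIB).2
  obtain ⟨p, hp, rfl⟩ := mem_arc.mp ht
  obtain ⟨q, hq, hqp⟩ := mem_arc.mp ht'
  rw [add_assoc, ← Nat.cast_add_one, add_natCast_inj (by omega) (by omega)] at hqp
  obtain ⟨r, hr, hrp⟩ : ∃ r, Odd r ∧ (r = p ∨ r = p + 1) :=
    (Nat.even_or_odd p).elim (fun h => ⟨p + 1, h.add_one, Or.inr rfl⟩)
      (fun h => ⟨p, h, Or.inl rfl⟩)
  have hrk : r + 1 < k := by
    rw [Nat.odd_iff] at hr hk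
    omega
  obtain ⟨n, f, hf, -, hcover⟩ := hB.2.2 _ hIB
  obtain ⟨j, hj⟩ := Set.mem_iUnion.mp (hcover (add_natCast_mem_Iev_arc c hr hk hrk hkN))
  have hfj : ¬ (c + (p : ZMod N) ∈ f j ∧ c + (p : ZMod N) + 1 ∈ f j) := fun hboth =>
    (Finset.card_lt_card (hf j).2.1).not_ge (hmin _ (Finset.mem_filter.mpr ⟨(hf j).1, hboth⟩))
  refine ⟨f j, (hf j).1, ?_⟩
  rcases hrp with rfl | rfl
  · exact Or.inl ⟨hj, fun h => hfj ⟨hj, h⟩⟩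
  · rw [Nat.cast_add_one, ← add_assoc] at hj
    exact Or.inr ⟨hj, fun h => hfj ⟨h, hj⟩⟩

lemma zee_piQ (t t' : ZMod N) (v : Vc N) : zee N t t' (piQ N v) = v t + v t' := rfl

lemma zee_comm (t t' : ZMod N) : zee N t t' = zee N t' t :=
  Submodule.linearMap_qext _ (LinearMap.ext fun v => add_comm (v t) (v t'))

lemma epsB_ebar (B : Finset (Finset (ZMod N))) :
    epsB (ebar N) B = piQ N fun s => ((gs B s * (gs B s + 1) / 2 : ℕ) : ZMod 2) := by
  simp only [epsB, ebar, eVec, ← map_smul, ← map_sum, ← Pi.single_smul', smul_eq_mul, mul_one,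
    Finset.univ_sum_single]

lemma card_filter_add_card_filter_eq_one (hN : 3 ≤ N) (hB : B ∈ phiSet (cadj N)) {t : ZMod N}
    (h : ∃ I ∈ B, t ∈ I ∧ t + 1 ∈ I) :
    (B.filter fun I => t ∈ I ∧ t + 1 ∉ I).card +
      (B.filter fun I => t + 1 ∈ I ∧ t ∉ I).card = 1 := by
  have ha := card_filter_mem_succ_notMem_le_one hN hB t
  have hb := card_filter_succ_mem_notMem_le_one hN hB t
  have hzero : (B.filter fun I => t ∈ I ∧ t + 1 ∉ I).card = 0 ∨
      (B.filter fun I => t + 1 ∈ I ∧ t ∉ I).card = 0 := by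
    by_contra! hne
    obtain ⟨I, hI⟩ := Finset.card_pos.mp (Nat.pos_of_ne_zero hne.1)
    obtain ⟨J, hJ⟩ := Finset.card_pos.mp (Nat.pos_of_ne_zero hne.2)
    obtain ⟨hIB, htI, htI'⟩ := Finset.mem_filter.mp hI
    obtain ⟨hJB, htJ, htJ'⟩ := Finset.mem_filter.mp hJ
    exact htI' (succ_mem_of_mem hN hB hIB hJB htJ htJ' htI)
  have hpos : 0 < (B.filter fun I => t ∈ I ∧ t + 1 ∉ I).card +
      (B.filter fun I => t + 1 ∈ I ∧ t ∉ I).card := by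
    obtain ⟨J, hJB, hJ | hJ⟩ := exists_mem_xor_of_mem hN hB h
    · exact Nat.add_pos_left (Finset.card_pos.mpr ⟨J, Finset.mem_filter.mpr ⟨hJB, hJ⟩⟩) _
    · exact Nat.add_pos_right _ (Finset.card_pos.mpr ⟨J, Finset.mem_filter.mpr ⟨hJB, hJ⟩⟩)
  omega

lemma zee_epsB_eq_nB_add_one (hN : 3 ≤ N) (hB : B ∈ phiSet (cadj N)) {t : ZMod N}
    (hn : 0 < nB {t, t + 1} B) :
    zee N t (t + 1) (epsB (ebar N) B) = ((nB {t, t + 1} B + 1 : ℕ) : ZMod 2) := by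
  have h : ∃ I ∈ B, t ∈ I ∧ t + 1 ∈ I := by
    simpa [nB_pair, Finset.card_pos, Finset.filter_nonempty_iff] using hn
  have hab := card_filter_add_card_filter_eq_one hN hB h
  have hcomm : nB {t + 1, t} B = nB {t, t + 1} B := by rw [Finset.pair_comm]
  rw [epsB_ebar, zee_piQ, gs_eq_card_filter_add_card_filter B t (t + 1),
    gs_eq_card_filter_add_card_filter B (t + 1) t, ← nB_pair, ← nB_pair, hcomm]
  set a := (B.filter fun I => t ∈ I ∧ t + 1 ∉ I).card
  set b := (B.filter fun I => t + 1 ∈ I ∧ t ∉ I).card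
  obtain ⟨ha, hb⟩ | ⟨ha, hb⟩ : a = 1 ∧ b = 0 ∨ a = 0 ∧ b = 1 := by omega
  · rw [ha, hb, add_zero, add_comm, natCast_triangle_add_triangle_succ, Nat.cast_add_one]
  · rw [ha, hb, add_zero, natCast_triangle_add_triangle_succ, Nat.cast_add_one]

end

end Cycle

theorem statement18_general (N : ℕ) [NeZero N] (hN : 3 ≤ N)
    (t t' : ZMod N) (hadj : cadj N t t')
    (B : Finset (Finset (ZMod N))) (hB : B ∈ phiSet (cadj N)) :
    (Odd (nB ({t, t'} : Finset (ZMod N)) B) → zee N t t' (epsB (ebar N) B) = 0) ∧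
    (Even (nB ({t, t'} : Finset (ZMod N)) B) → 2 ≤ nB ({t, t'} : Finset (ZMod N)) B →
      zee N t t' (epsB (ebar N) B) = 1) := by
  have key : 0 < nB {t, t'} B →
      zee N t t' (epsB (ebar N) B) = ((nB {t, t'} B + 1 : ℕ) : ZMod 2) := by
    rcases hadj with rfl | rfl
    · exact Cycle.zee_epsB_eq_nB_add_one hN hB
    · rw [Finset.pair_comm, Cycle.zee_comm]
      exact Cycle.zee_epsB_eq_nB_add_one hN hB
  refine ⟨fun hodd => ?_, fun heven h2 => ?_⟩
  · rw [key hodd.pos, ZMod.natCast_eq_zero_iff_even]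
    exact hodd.add_one
  · rw [key (by omega), ZMod.natCast_eq_one_iff_odd]
    exact heven.add_one

/-- if `n_B` is odd then `z_ee(eps(B)) = 0`; if `n_B` is even and
`n_B ≥ 2` then `z_ee(eps(B)) = 1`. -/
theorem statement18 (N : ℕ) [NeZero N] (hN : 3 ≤ N) (hodd : Odd N)
    (t t' : ZMod N) (hadj : cadj N t t')
    (B : Finset (Finset (ZMod N))) (hB : B ∈ phiSet (cadj N)) :
    (Odd (nB ({t, t'} : Finset (ZMod N)) B) → zee N t t' (epsB (ebar N) B) = 0) ∧
    (Even (nB ({t, t'} : Finset (ZMod N)) B) → 2 ≤ nB ({t, t'} : Finset (ZMod N)) B →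
      zee N t t' (epsB (ebar N) B) = 1) :=
  statement18_general N hN t t' hadj B hB
end
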